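/- arXiv:1109.5567 — 2 statements merged into one kernel-verified Lean document; each statement's English description precedes it below -/
import Mathlib

section
/- Let a < b be real numbers, let f, g : ℝ → ℝ be nonnegative measurable functions on [a,b], and let 0 < r < 1 < p. Assume that f^p, f^r, g^p, g^r, (f+g)^p and (f+g)^r are integrable on [a,b], and that ∫_a^b f(x)^r dx > 0, ∫_a^b g(x)^r dx > 0, and ∫_a^b (f(x)+g(x))^r dx > 0. Then the Radon-type ratio inequality holds: ( (∫_a^b (f(x)+g(x))^p dx) / (∫_a^b (f(x)+g(x))^r dx) )^{1/(p-r)} ≤ ( (∫_a^b f(x)^p dx) / (∫_a^b f(x)^r dx) )^{1/(p-r)} + ( (∫_a^b g(x)^p dx) / (∫_a^b g(x)^r dx) )^{1/(p-r)}. -/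
/-!
Put `A = (∫ f^p / ∫ f^r)^(1/(p-r))` and `B = (∫ g^p / ∫ g^r)^(1/(p-r))`, so that
`A^(1-p) ∫ f^p = A^(1-r) ∫ f^r` and likewise for `B`. The perspective of the convex function
`t ↦ t^p` gives pointwise `(A+B)^(1-p) (f+g)^p ≤ A^(1-p) f^p + B^(1-p) g^p`, and that of the
concave function `t ↦ t^r` gives the reverse inequality for the exponent `r`. Integrating,
`(A+B)^(1-p) ∫ (f+g)^p ≤ S ≤ (A+B)^(1-r) ∫ (f+g)^r` with
`S = A^(1-r) ∫ f^r + B^(1-r) ∫ g^r`, that is, `∫ (f+g)^p / ∫ (f+g)^r ≤ (A+B)^(p-r)`.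
-/

open MeasureTheory Set

theorem ConvexOn.mul_comp_add_div_add_le {φ : ℝ → ℝ} (hφ : ConvexOn ℝ (Ici 0) φ)
    {A B c d : ℝ} (hA : 0 < A) (hB : 0 < B) (hc : 0 ≤ c) (hd : 0 ≤ d) :
    (A + B) * φ ((c + d) / (A + B)) ≤ A * φ (c / A) + B * φ (d / B) := by
  have hAB : 0 < A + B := add_pos hA hB
  have h := hφ.2 (mem_Ici.2 (div_nonneg hc hA.le)) (mem_Ici.2 (div_nonneg hd hB.le))
    (div_pos hA hAB).le (div_pos hB hAB).le (by field_simp)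
  have hpt : A / (A + B) * (c / A) + B / (A + B) * (d / B) = (c + d) / (A + B) := by
    field_simp
  simp only [smul_eq_mul, hpt] at h
  calc (A + B) * φ ((c + d) / (A + B))
      ≤ (A + B) * (A / (A + B) * φ (c / A) + B / (A + B) * φ (d / B)) := by gcongr
    _ = A * φ (c / A) + B * φ (d / B) := by field_simp

theorem ConcaveOn.le_mul_comp_add_div_add {φ : ℝ → ℝ} (hφ : ConcaveOn ℝ (Ici 0) φ)
    {A B c d : ℝ} (hA : 0 < A) (hB : 0 < B) (hc : 0 ≤ c) (hd : 0 ≤ d) :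
    A * φ (c / A) + B * φ (d / B) ≤ (A + B) * φ ((c + d) / (A + B)) := by
  have h := hφ.neg.mul_comp_add_div_add_le hA hB hc hd
  simp only [Pi.neg_apply, mul_neg] at h
  linarith

namespace Real

theorem mul_div_rpow_eq {x y : ℝ} (hx : 0 < x) (hy : 0 ≤ y) (s : ℝ) :
    x * (y / x) ^ s = x ^ (1 - s) * y ^ s := by
  rw [div_rpow hy hx.le, rpow_sub hx, rpow_one]
  field_simp

theorem rpow_one_sub_mul_add_rpow_le {s A B c d : ℝ} (hs : 1 ≤ s) (hA : 0 < A) (hB : 0 < B)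
    (hc : 0 ≤ c) (hd : 0 ≤ d) :
    (A + B) ^ (1 - s) * (c + d) ^ s ≤ A ^ (1 - s) * c ^ s + B ^ (1 - s) * d ^ s := by
  have h := (convexOn_rpow hs).mul_comp_add_div_add_le hA hB hc hd
  rwa [mul_div_rpow_eq (add_pos hA hB) (add_nonneg hc hd), mul_div_rpow_eq hA hc,
    mul_div_rpow_eq hB hd] at h

theorem rpow_one_sub_mul_add_rpow_ge {s A B c d : ℝ} (hs0 : 0 ≤ s) (hs1 : s ≤ 1) (hA : 0 < A)
    (hB : 0 < B) (hc : 0 ≤ c) (hd : 0 ≤ d) :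
    A ^ (1 - s) * c ^ s + B ^ (1 - s) * d ^ s ≤ (A + B) ^ (1 - s) * (c + d) ^ s := by
  have h := (concaveOn_rpow hs0 hs1).le_mul_comp_add_div_add hA hB hc hd
  rwa [mul_div_rpow_eq (add_pos hA hB) (add_nonneg hc hd), mul_div_rpow_eq hA hc,
    mul_div_rpow_eq hB hd] at h

theorem rpow_one_div_sub_rpow_one_sub_mul {P R p r : ℝ} (hP : 0 < P) (hR : 0 < R) (hpr : p ≠ r) :
    ((P / R) ^ (1 / (p - r))) ^ (1 - p) * P = ((P / R) ^ (1 / (p - r))) ^ (1 - r) * R := by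
  have hApr : ((P / R) ^ (1 / (p - r))) ^ (p - r) = P / R := by
    rw [one_div, rpow_inv_rpow (div_pos hP hR).le (sub_ne_zero.2 hpr)]
  set A := (P / R) ^ (1 / (p - r))
  have hA : 0 < A := rpow_pos_of_pos (div_pos hP hR) _
  have hexp : 1 - p = (1 - r) - (p - r) := by ring
  rw [hexp, rpow_sub hA, hApr]
  field_simp

theorem div_rpow_one_div_sub_le {P R T p r : ℝ} (hP : 0 ≤ P) (hR : 0 < R) (hT : 0 < T)
    (hrp : r < p) (h : T ^ (1 - p) * P ≤ T ^ (1 - r) * R) :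
    (P / R) ^ (1 / (p - r)) ≤ T := by
  have hratio : P / R ≤ T ^ (p - r) := by
    rw [div_le_iff₀ hR]
    calc P = T ^ (p - 1) * (T ^ (1 - p) * P) := by
          rw [← mul_assoc, ← rpow_add hT]; simp
      _ ≤ T ^ (p - 1) * (T ^ (1 - r) * R) := by gcongr
      _ = T ^ (p - r) * R := by rw [← mul_assoc, ← rpow_add hT]; ring_nf
  calc (P / R) ^ (1 / (p - r)) ≤ (T ^ (p - r)) ^ (1 / (p - r)) := by gcongr
    _ = T := by rw [← rpow_mul hT.le, mul_one_div_cancel (sub_pos.2 hrp).ne', rpow_one]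

end Real

section Integral

variable {α : Type*} [MeasurableSpace α] {μ : Measure α} {f g : α → ℝ}

theorem integral_rpow_pos_of_integral_rpow_pos (hf0 : 0 ≤ᵐ[μ] f) {r q : ℝ} (hr : 0 < r)
    (hfq : Integrable (fun x => f x ^ q) μ) (hpos : 0 < ∫ x, f x ^ r ∂μ) :
    0 < ∫ x, f x ^ q ∂μ := by
  have hfr : Integrable (fun x => f x ^ r) μ := Integrable.of_integral_ne_zero hpos.ne'
  have hnonneg (s : ℝ) : 0 ≤ᵐ[μ] fun x => f x ^ s := by
    filter_upwards [hf0] with x hx using Real.rpow_nonneg hx s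
  rw [integral_pos_iff_support_of_nonneg_ae (hnonneg r) hfr] at hpos
  rw [integral_pos_iff_support_of_nonneg_ae (hnonneg q) hfq]
  refine hpos.trans_le (measure_mono_ae ?_)
  filter_upwards [hf0] with x (hx : 0 ≤ f x) (hxr : f x ^ r ≠ 0)
  have hfx : f x ≠ 0 := fun h => hxr (by rw [h, Real.zero_rpow hr.ne'])
  exact (Real.rpow_pos_of_pos (hx.lt_of_ne' hfx) q).ne'

theorem rpow_one_sub_mul_integral_add_rpow_le {s A B : ℝ} (hs : 1 ≤ s) (hA : 0 < A) (hB : 0 < B)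
    (hf0 : 0 ≤ᵐ[μ] f) (hg0 : 0 ≤ᵐ[μ] g) (hfs : Integrable (fun x => f x ^ s) μ)
    (hgs : Integrable (fun x => g x ^ s) μ) (hfgs : Integrable (fun x => (f x + g x) ^ s) μ) :
    (A + B) ^ (1 - s) * ∫ x, (f x + g x) ^ s ∂μ
      ≤ A ^ (1 - s) * ∫ x, f x ^ s ∂μ + B ^ (1 - s) * ∫ x, g x ^ s ∂μ := by
  rw [← integral_const_mul, ← integral_const_mul, ← integral_const_mul,
    ← integral_add (hfs.const_mul _) (hgs.const_mul _)]
  refine integral_mono_ae (hfgs.const_mul _) ((hfs.const_mul _).add (hgs.const_mul _)) ?_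
  filter_upwards [hf0, hg0] with x hfx hgx
  exact Real.rpow_one_sub_mul_add_rpow_le hs hA hB hfx hgx

theorem rpow_one_sub_mul_integral_add_rpow_ge {s A B : ℝ} (hs0 : 0 ≤ s) (hs1 : s ≤ 1)
    (hA : 0 < A) (hB : 0 < B) (hf0 : 0 ≤ᵐ[μ] f) (hg0 : 0 ≤ᵐ[μ] g)
    (hfs : Integrable (fun x => f x ^ s) μ) (hgs : Integrable (fun x => g x ^ s) μ)
    (hfgs : Integrable (fun x => (f x + g x) ^ s) μ) :
    A ^ (1 - s) * ∫ x, f x ^ s ∂μ + B ^ (1 - s) * ∫ x, g x ^ s ∂μ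
      ≤ (A + B) ^ (1 - s) * ∫ x, (f x + g x) ^ s ∂μ := by
  rw [← integral_const_mul, ← integral_const_mul, ← integral_const_mul,
    ← integral_add (hfs.const_mul _) (hgs.const_mul _)]
  refine integral_mono_ae ((hfs.const_mul _).add (hgs.const_mul _)) (hfgs.const_mul _) ?_
  filter_upwards [hf0, hg0] with x hfx hgx
  exact Real.rpow_one_sub_mul_add_rpow_ge hs0 hs1 hA hB hfx hgx

theorem integral_add_rpow_ratio_le {p r : ℝ} (hr0 : 0 < r) (hr1 : r ≤ 1) (hp : 1 ≤ p)
    (hrp : r < p) (hf0 : 0 ≤ᵐ[μ] f) (hg0 : 0 ≤ᵐ[μ] g)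
    (hfp : Integrable (fun x => f x ^ p) μ) (hfr : Integrable (fun x => f x ^ r) μ)
    (hgp : Integrable (fun x => g x ^ p) μ) (hgr : Integrable (fun x => g x ^ r) μ)
    (hfgp : Integrable (fun x => (f x + g x) ^ p) μ)
    (hfgr : Integrable (fun x => (f x + g x) ^ r) μ)
    (hfrpos : 0 < ∫ x, f x ^ r ∂μ) (hgrpos : 0 < ∫ x, g x ^ r ∂μ)
    (hfgrpos : 0 < ∫ x, (f x + g x) ^ r ∂μ) :
    ((∫ x, (f x + g x) ^ p ∂μ) / ∫ x, (f x + g x) ^ r ∂μ) ^ (1 / (p - r))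
      ≤ ((∫ x, f x ^ p ∂μ) / ∫ x, f x ^ r ∂μ) ^ (1 / (p - r))
        + ((∫ x, g x ^ p ∂μ) / ∫ x, g x ^ r ∂μ) ^ (1 / (p - r)) := by
  have hfppos := integral_rpow_pos_of_integral_rpow_pos hf0 hr0 hfp hfrpos
  have hgppos := integral_rpow_pos_of_integral_rpow_pos hg0 hr0 hgp hgrpos
  have hA := Real.rpow_pos_of_pos (div_pos hfppos hfrpos) (1 / (p - r))
  have hB := Real.rpow_pos_of_pos (div_pos hgppos hgrpos) (1 / (p - r))
  refine Real.div_rpow_one_div_sub_le (integral_nonneg_of_ae ?_) hfgrpos (add_pos hA hB) hrp ?_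
  · filter_upwards [hf0, hg0] with x hfx hgx using Real.rpow_nonneg (add_nonneg hfx hgx) p
  calc _ ≤ _ := rpow_one_sub_mul_integral_add_rpow_le hp hA hB hf0 hg0 hfp hgp hfgp
    _ = _ := by
      rw [Real.rpow_one_div_sub_rpow_one_sub_mul hfppos hfrpos hrp.ne',
        Real.rpow_one_div_sub_rpow_one_sub_mul hgppos hgrpos hrp.ne']
    _ ≤ _ := rpow_one_sub_mul_integral_add_rpow_ge hr0.le hr1 hA hB hf0 hg0 hfr hgr hfgr

end Integral

theorem radon_type_ratio_general (a b : ℝ) (f g : ℝ → ℝ)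
    (hf0 : ∀ x ∈ Icc a b, 0 ≤ f x) (hg0 : ∀ x ∈ Icc a b, 0 ≤ g x)
    (p r : ℝ) (hr0 : 0 < r) (hr1 : r < 1) (hp : 1 < p)
    (hfp : IntegrableOn (fun x => f x ^ p) (Icc a b))
    (hfr : IntegrableOn (fun x => f x ^ r) (Icc a b))
    (hgp : IntegrableOn (fun x => g x ^ p) (Icc a b))
    (hgr : IntegrableOn (fun x => g x ^ r) (Icc a b))
    (hfgp : IntegrableOn (fun x => (f x + g x) ^ p) (Icc a b))
    (hfgr : IntegrableOn (fun x => (f x + g x) ^ r) (Icc a b))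
    (hfrpos : 0 < ∫ x in Icc a b, f x ^ r)
    (hgrpos : 0 < ∫ x in Icc a b, g x ^ r)
    (hfgrpos : 0 < ∫ x in Icc a b, (f x + g x) ^ r) :
    ((∫ x in Icc a b, (f x + g x) ^ p) / (∫ x in Icc a b, (f x + g x) ^ r)) ^ (1 / (p - r))
      ≤ ((∫ x in Icc a b, f x ^ p) / (∫ x in Icc a b, f x ^ r)) ^ (1 / (p - r))
        + ((∫ x in Icc a b, g x ^ p) / (∫ x in Icc a b, g x ^ r)) ^ (1 / (p - r)) :=
  integral_add_rpow_ratio_le hr0 hr1.le hp.le (hr1.trans hp)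
    (ae_restrict_of_forall_mem measurableSet_Icc hf0)
    (ae_restrict_of_forall_mem measurableSet_Icc hg0)
    hfp hfr hgp hgr hfgp hfgr hfrpos hgrpos hfgrpos

theorem radon_type_ratio (a b : ℝ) (hab : a < b) (f g : ℝ → ℝ)
    (hf : Measurable f) (hg : Measurable g)
    (hf0 : ∀ x ∈ Icc a b, 0 ≤ f x) (hg0 : ∀ x ∈ Icc a b, 0 ≤ g x)
    (p r : ℝ) (hr0 : 0 < r) (hr1 : r < 1) (hp : 1 < p)
    (hfp : IntegrableOn (fun x => f x ^ p) (Icc a b))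
    (hfr : IntegrableOn (fun x => f x ^ r) (Icc a b))
    (hgp : IntegrableOn (fun x => g x ^ p) (Icc a b))
    (hgr : IntegrableOn (fun x => g x ^ r) (Icc a b))
    (hfgp : IntegrableOn (fun x => (f x + g x) ^ p) (Icc a b))
    (hfgr : IntegrableOn (fun x => (f x + g x) ^ r) (Icc a b))
    (hfrpos : 0 < ∫ x in Icc a b, f x ^ r)
    (hgrpos : 0 < ∫ x in Icc a b, g x ^ r)
    (hfgrpos : 0 < ∫ x in Icc a b, (f x + g x) ^ r) :
    ((∫ x in Icc a b, (f x + g x) ^ p) / (∫ x in Icc a b, (f x + g x) ^ r)) ^ (1 / (p - r))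
      ≤ ((∫ x in Icc a b, f x ^ p) / (∫ x in Icc a b, f x ^ r)) ^ (1 / (p - r))
        + ((∫ x in Icc a b, g x ^ p) / (∫ x in Icc a b, g x ^ r)) ^ (1 / (p - r)) :=
  radon_type_ratio_general a b f g hf0 hg0 p r hr0 hr1 hp hfp hfr hgp hgr hfgp hfgr hfrpos hgrpos
    hfgrpos
end

section
/- Let a < b be real numbers, let m ≥ 1, let f_1, …, f_m : ℝ → ℝ be nonnegative measurable functions on [a,b], and let 0 < r < 1 < p. Assume that for each j the functions f_j^p and f_j^r are integrable on [a,b] with ∫_a^b f_j(x)^r dx > 0, and that (∑_{j=1}^m f_j)^p and (∑_{j=1}^m f_j)^r are integrable on [a,b] with ∫_a^b (∑_{j=1}^m f_j(x))^r dx > 0. Then ( (∫_a^b (∑_{j=1}^m f_j(x))^p dx) / (∫_a^b (∑_{j=1}^m f_j(x))^r dx) )^{1/(p-r)} ≤ ∑_{j=1}^m ( (∫_a^b f_j(x)^p dx) / (∫_a^b f_j(x)^r dx) )^{1/(p-r)}. -/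
/-!
For `S = ∑ f_j` the left-hand side is the Gini mean `G_{p,r}(S) = (∫ S^p / ∫ S^r)^(1/(p-r))`, and
the theorem is Minkowski's inequality for Gini means. Splitting `S^p = ∑ S^(p-1) f_j` and
`S^r = ∑ S^(r-1) f_j` gives `∫ S^p = ∑ α_j` and `∫ S^r = ∑ β_j`, and Hölder's inequality yields
`α_j ≤ (∫ f_j^p)^(1/p) (∫ S^p)^(1-1/p)` and `∫ f_j^r ≤ β_j^r (∫ S^r)^(1-r)`. These bound each
`G_{p,r}(f_j)` from below in terms of the weights `α_j / ∫ S^p` and `β_j / ∫ S^r`, which both sum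
to `1`; Jensen's inequality for `x ↦ x^(p/(p-r))` then sums the bounds to `G_{p,r}(S)`.
-/

open MeasureTheory Set

noncomputable def giniMean {X : Type*} [MeasurableSpace X] (μ : Measure X) (p r : ℝ)
    (g : X → ℝ) : ℝ :=
  ((∫ x, g x ^ p ∂μ) / ∫ x, g x ^ r ∂μ) ^ (1 / (p - r))

lemma Real.rpow_sub_one_mul_self {x t : ℝ} (hx : 0 ≤ x) (ht : t ≠ 0) : x ^ (t - 1) * x = x ^ t := by
  rw [← Real.rpow_add_one' hx (by simpa using ht), sub_add_cancel]

lemma one_le_sum_mul_div_rpow {ι : Type*} (s : Finset ι) {a b : ι → ℝ} {u : ℝ} (hu : 1 ≤ u)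
    (ha : ∀ i ∈ s, 0 ≤ a i) (hb : ∀ i ∈ s, 0 < b i)
    (hsa : ∑ i ∈ s, a i = 1) (hsb : ∑ i ∈ s, b i = 1) :
    1 ≤ ∑ i ∈ s, b i * (a i / b i) ^ u := by
  have jensen := (convexOn_rpow hu).map_sum_le (fun i hi => (hb i hi).le) hsb
    (fun i hi => mem_Ici.2 (div_nonneg (ha i hi) (hb i hi).le))
  have hmean : ∑ i ∈ s, b i • (a i / b i) = 1 := by
    rw [← hsa]
    exact Finset.sum_congr rfl fun i hi => mul_div_cancel₀ _ (hb i hi).ne'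
  rw [hmean, Real.one_rpow] at jensen
  simpa only [smul_eq_mul] using jensen

lemma div_le_div_rpow_of_le_rpow_mul_rpow {x y z θ : ℝ} (hy : 0 < y) (hz : 0 ≤ z)
    (h : x ≤ z ^ θ * y ^ (1 - θ)) : x / y ≤ (z / y) ^ θ := by
  calc x / y ≤ z ^ θ * y ^ (1 - θ) / y := by gcongr
    _ = (z / y) ^ θ := by
      rw [Real.div_rpow hz hy.le, Real.rpow_sub hy, Real.rpow_one]
      field_simp

lemma mul_div_rpow_le_div_rpow {a b x y p r : ℝ} (hrp : r < p) (ha : 0 ≤ a) (hb : 0 < b)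
    (hy : 0 < y) (hax : a ^ p ≤ x) (hyb : y ≤ b ^ r) :
    b * (a / b) ^ (p / (p - r)) ≤ (x / y) ^ (1 / (p - r)) := by
  have hpr : p - r ≠ 0 := by linarith
  have hbase : a ^ p / b ^ r = b ^ (p - r) * (a / b) ^ p := by
    rw [Real.div_rpow ha hb.le, Real.rpow_sub hb]
    field_simp
  have hsplit : (a ^ p / b ^ r) ^ (1 / (p - r)) = b * (a / b) ^ (p / (p - r)) := by
    rw [hbase, Real.mul_rpow (by positivity) (by positivity), ← Real.rpow_mul hb.le,
      ← Real.rpow_mul (div_nonneg ha hb.le), mul_one_div_cancel hpr, Real.rpow_one, mul_one_div]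
  rw [← hsplit]
  exact Real.rpow_le_rpow (by positivity) (div_le_div₀ (hax.trans' (by positivity)) hax hy hyb)
    (by positivity)

lemma div_rpow_le_sum_div_rpow {ι : Type*} (s : Finset ι) {p r A B : ℝ} {α β P R : ι → ℝ}
    (hr : 0 ≤ r) (hrp : r < p) (hA : 0 ≤ A) (hB : 0 < B)
    (hα0 : ∀ i ∈ s, 0 ≤ α i) (hβ : ∀ i ∈ s, 0 < β i)
    (hP : ∀ i ∈ s, 0 ≤ P i) (hR : ∀ i ∈ s, 0 < R i)
    (hαA : ∑ i ∈ s, α i = A) (hβB : ∑ i ∈ s, β i = B)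
    (hαP : ∀ i ∈ s, α i ≤ P i ^ p⁻¹ * A ^ (1 - p⁻¹))
    (hRβ : ∀ i ∈ s, R i ≤ β i ^ r * B ^ (1 - r)) :
    (A / B) ^ (1 / (p - r)) ≤ ∑ i ∈ s, (P i / R i) ^ (1 / (p - r)) := by
  have hp : 0 < p := by linarith
  rcases hA.eq_or_lt with rfl | hA
  · rw [zero_div, Real.zero_rpow (by positivity)]
    exact Finset.sum_nonneg fun i hi => Real.rpow_nonneg (div_nonneg (hP i hi) (hR i hi).le) _
  have ha i (hi : i ∈ s) : 0 ≤ α i / A := div_nonneg (hα0 i hi) hA.le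
  have hb i (hi : i ∈ s) : 0 < β i / B := div_pos (hβ i hi) hB
  have hnormα : ∀ i ∈ s, (α i / A) ^ p ≤ P i / A := fun i hi =>
    (Real.le_rpow_inv_iff_of_pos (ha i hi) (div_nonneg (hP i hi) hA.le) hp).1
      (div_le_div_rpow_of_le_rpow_mul_rpow hA (hP i hi) (hαP i hi))
  have hnormR : ∀ i ∈ s, R i / B ≤ (β i / B) ^ r := fun i hi =>
    div_le_div_rpow_of_le_rpow_mul_rpow hB (hβ i hi).le (hRβ i hi)
  have hjensen := one_le_sum_mul_div_rpow s (a := fun i => α i / A) (b := fun i => β i / B)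
    (u := p / (p - r))
    ((one_le_div₀ (by linarith)).2 (by linarith)) ha hb
    (by rw [← Finset.sum_div, hαA, div_self hA.ne'])
    (by rw [← Finset.sum_div, hβB, div_self hB.ne'])
  calc (A / B) ^ (1 / (p - r))
      ≤ (A / B) ^ (1 / (p - r)) * ∑ i ∈ s, β i / B * ((α i / A) / (β i / B)) ^ (p / (p - r)) :=
        le_mul_of_one_le_right (by positivity) hjensen
    _ ≤ (A / B) ^ (1 / (p - r)) * ∑ i ∈ s, ((P i / A) / (R i / B)) ^ (1 / (p - r)) := by
        gcongr with i hi
        exact mul_div_rpow_le_div_rpow hrp (ha i hi) (hb i hi) (div_pos (hR i hi) hB)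
          (hnormα i hi) (hnormR i hi)
    _ = ∑ i ∈ s, (P i / R i) ^ (1 / (p - r)) := by
        rw [Finset.mul_sum]
        refine Finset.sum_congr rfl fun i hi => ?_
        rw [← Real.mul_rpow (by positivity)
          (div_nonneg (div_nonneg (hP i hi) hA.le) (div_pos (hR i hi) hB).le)]
        congr 1
        field_simp

section Integral

variable {X : Type*} [MeasurableSpace X] {μ : Measure X}

lemma MeasureTheory.Integrable.memLp_rpow {w : X → ℝ} (hw : Integrable w μ) (hw0 : 0 ≤ᵐ[μ] w)
    {c : ℝ} (hc : 0 < c) : MemLp (fun x => w x ^ c) (ENNReal.ofReal c⁻¹) μ := by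
  have hnorm : MemLp (fun x => ‖w x‖ ^ (ENNReal.ofReal c).toReal) (1 / ENNReal.ofReal c) μ := by
    rw [memLp_norm_rpow_iff hw.aestronglyMeasurable (by simpa using hc) ENNReal.ofReal_ne_top,
      memLp_one_iff_integrable]
    exact hw
  rw [one_div, ← ENNReal.ofReal_inv_of_pos hc] at hnorm
  refine hnorm.ae_eq ?_
  filter_upwards [hw0] with x hx
  rw [ENNReal.toReal_ofReal hc.le, Real.norm_of_nonneg hx]

lemma integral_rpow_mul_rpow_le {u v : X → ℝ} (hu : Integrable u μ) (hv : Integrable v μ)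
    (hu0 : 0 ≤ᵐ[μ] u) (hv0 : 0 ≤ᵐ[μ] v) {θ : ℝ} (hθ0 : 0 < θ) (hθ1 : θ < 1) :
    ∫ x, u x ^ θ * v x ^ (1 - θ) ∂μ ≤ (∫ x, u x ∂μ) ^ θ * (∫ x, v x ∂μ) ^ (1 - θ) := by
  have hθ1' : 0 < 1 - θ := by linarith
  have hconj : θ⁻¹.HolderConjugate (1 - θ)⁻¹ :=
    ⟨by rw [inv_inv, inv_inv, inv_one]; ring, by positivity, by positivity⟩
  have holder := integral_mul_le_Lp_mul_Lq_of_nonneg hconj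
    (by filter_upwards [hu0] with x hx using Real.rpow_nonneg hx θ)
    (by filter_upwards [hv0] with x hx using Real.rpow_nonneg hx (1 - θ))
    (hu.memLp_rpow hu0 hθ0) (hv.memLp_rpow hv0 hθ1')
  have hcancel {w : X → ℝ} (hw0 : 0 ≤ᵐ[μ] w) {c : ℝ} (hc : 0 < c) :
      ∫ x, (w x ^ c) ^ c⁻¹ ∂μ = ∫ x, w x ∂μ := by
    refine integral_congr_ae ?_
    filter_upwards [hw0] with x hx using Real.rpow_rpow_inv hx hc.ne'
  rwa [hcancel hu0 hθ0, hcancel hv0 hθ1', one_div, one_div, inv_inv, inv_inv] at holder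

lemma MeasureTheory.Integrable.rpow_sub_one_mul_of_le {g h : X → ℝ} (hg : AEMeasurable g μ)
    (hh : AEMeasurable h μ) (hg0 : 0 ≤ᵐ[μ] g) (hgh : g ≤ᵐ[μ] h) {t : ℝ} (ht : t ≠ 0)
    (hht : Integrable (fun x => h x ^ t) μ) : Integrable (fun x => h x ^ (t - 1) * g x) μ := by
  refine hht.mono' (by fun_prop) ?_
  filter_upwards [hg0, hgh] with x hx0 hxh
  have hh0 : 0 ≤ h x := hx0.trans hxh
  rw [Real.norm_of_nonneg (mul_nonneg (Real.rpow_nonneg hh0 _) hx0),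
    ← Real.rpow_sub_one_mul_self hh0 ht]
  gcongr

lemma integral_rpow_eq_sum_integral_rpow_sub_one_mul {ι : Type*} [Fintype ι] {f : ι → X → ℝ}
    (hf : ∀ j, AEMeasurable (f j) μ) (hf0 : ∀ j, 0 ≤ᵐ[μ] f j) {t : ℝ} (ht : t ≠ 0)
    (hS : Integrable (fun x => (∑ j, f j x) ^ t) μ) :
    ∫ x, (∑ j, f j x) ^ t ∂μ = ∑ j, ∫ x, (∑ j', f j' x) ^ (t - 1) * f j x ∂μ := by
  have hf0' : ∀ᵐ x ∂μ, ∀ j, 0 ≤ f j x := ae_all_iff.2 hf0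
  rw [← integral_finsetSum]
  · refine integral_congr_ae ?_
    filter_upwards [hf0'] with x hx
    rw [← Finset.mul_sum, Real.rpow_sub_one_mul_self (Finset.sum_nonneg fun j _ => hx j) ht]
  · refine fun j _ => hS.rpow_sub_one_mul_of_le (hf j) (by fun_prop) (hf0 j) ?_ ht
    filter_upwards [hf0'] with x hx
    exact Finset.single_le_sum (fun j _ => hx j) (Finset.mem_univ j)

lemma integral_rpow_sub_one_mul_le {g h : X → ℝ} (hg0 : 0 ≤ᵐ[μ] g) (hh0 : 0 ≤ᵐ[μ] h) {p : ℝ}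
    (hp : 1 < p) (hgp : Integrable (fun x => g x ^ p) μ) (hhp : Integrable (fun x => h x ^ p) μ) :
    ∫ x, h x ^ (p - 1) * g x ∂μ ≤ (∫ x, g x ^ p ∂μ) ^ p⁻¹ * (∫ x, h x ^ p ∂μ) ^ (1 - p⁻¹) := by
  have hp0 : 0 < p := by linarith
  refine le_of_eq_of_le (integral_congr_ae ?_) (integral_rpow_mul_rpow_le hgp hhp
    (by filter_upwards [hg0] with x hx using Real.rpow_nonneg hx p)
    (by filter_upwards [hh0] with x hx using Real.rpow_nonneg hx p)
    (inv_pos.2 hp0) (inv_lt_one_of_one_lt₀ hp))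
  filter_upwards [hg0, hh0] with x hgx hhx
  rw [Real.rpow_rpow_inv hgx hp0.ne', ← Real.rpow_mul hhx, mul_sub, mul_inv_cancel₀ hp0.ne',
    mul_one, mul_comm]

lemma integral_rpow_le_of_le {g h : X → ℝ} (hg : AEMeasurable g μ) (hh : AEMeasurable h μ)
    (hg0 : 0 ≤ᵐ[μ] g) (hgh : g ≤ᵐ[μ] h) {r : ℝ} (hr0 : 0 < r) (hr1 : r < 1)
    (hhr : Integrable (fun x => h x ^ r) μ) :
    ∫ x, g x ^ r ∂μ ≤ (∫ x, h x ^ (r - 1) * g x ∂μ) ^ r * (∫ x, h x ^ r ∂μ) ^ (1 - r) := by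
  have hh0 : 0 ≤ᵐ[μ] h := by filter_upwards [hg0, hgh] with x h0 h1 using h0.trans h1
  refine le_of_eq_of_le (integral_congr_ae ?_) (integral_rpow_mul_rpow_le
    (hhr.rpow_sub_one_mul_of_le hg hh hg0 hgh hr0.ne') hhr
    (by filter_upwards [hg0, hh0] with x hgx hhx using mul_nonneg (Real.rpow_nonneg hhx _) hgx)
    (by filter_upwards [hh0] with x hx using Real.rpow_nonneg hx r) hr0 hr1)
  filter_upwards [hg0, hgh] with x hgx hghx
  rcases (hgx.trans hghx).eq_or_lt with hhx | hhx
  · have hgx' : g x = 0 := le_antisymm (hghx.trans hhx.symm.le) hgx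
    simp [hgx', ← hhx, Real.zero_rpow hr0.ne', Real.zero_rpow (sub_pos.2 hr1).ne']
  · rw [Real.mul_rpow (Real.rpow_nonneg hhx.le _) hgx, ← Real.rpow_mul hhx.le,
      ← Real.rpow_mul hhx.le, mul_right_comm, ← Real.rpow_add hhx,
      show (r - 1) * r + r * (1 - r) = 0 by ring, Real.rpow_zero, one_mul]

theorem giniMean_sum_le {ι : Type*} [Fintype ι]
    {f : ι → X → ℝ} {p r : ℝ} (hr0 : 0 < r) (hr1 : r < 1) (hp : 1 < p)
    (hf : ∀ j, AEMeasurable (f j) μ) (hf0 : ∀ j, 0 ≤ᵐ[μ] f j)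
    (hfp : ∀ j, Integrable (fun x => f j x ^ p) μ) (hfr : ∀ j, 0 < ∫ x, f j x ^ r ∂μ)
    (hSp : Integrable (fun x => (∑ j, f j x) ^ p) μ)
    (hSr : Integrable (fun x => (∑ j, f j x) ^ r) μ) (hSr_pos : 0 < ∫ x, (∑ j, f j x) ^ r ∂μ) :
    giniMean μ p r (fun x => ∑ j, f j x) ≤ ∑ j, giniMean μ p r (f j) := by
  have hf0' : ∀ᵐ x ∂μ, ∀ j, 0 ≤ f j x := ae_all_iff.2 hf0
  have hS0 : 0 ≤ᵐ[μ] fun x => ∑ j, f j x := by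
    filter_upwards [hf0'] with x hx using Finset.sum_nonneg fun j _ => hx j
  have hfS : ∀ j, f j ≤ᵐ[μ] fun x => ∑ j, f j x := fun j => by
    filter_upwards [hf0'] with x hx using Finset.single_le_sum (fun j _ => hx j) (Finset.mem_univ j)
  have hmix0 : ∀ (t : ℝ) j, 0 ≤ ∫ x, (∑ j', f j' x) ^ t * f j x ∂μ := fun t j =>
    integral_nonneg_of_ae <| by
      filter_upwards [hS0, hf0 j] with x hSx hfx using mul_nonneg (Real.rpow_nonneg hSx _) hfx
  have hR := fun j => integral_rpow_le_of_le (hf j) (by fun_prop) (hf0 j) (hfS j) hr0 hr1 hSr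
  have hβ : ∀ j, 0 < ∫ x, (∑ j', f j' x) ^ (r - 1) * f j x ∂μ := fun j => by
    refine (hmix0 (r - 1) j).lt_of_ne fun hβj => (hfr j).not_ge ?_
    simpa [← hβj, Real.zero_rpow hr0.ne'] using hR j
  exact div_rpow_le_sum_div_rpow Finset.univ hr0.le (by linarith)
    (integral_nonneg_of_ae <| by filter_upwards [hS0] with x hx using Real.rpow_nonneg hx p)
    hSr_pos (fun j _ => hmix0 (p - 1) j) (fun j _ => hβ j)
    (fun j _ => integral_nonneg_of_ae <| by
      filter_upwards [hf0 j] with x hx using Real.rpow_nonneg hx p)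
    (fun j _ => hfr j)
    (integral_rpow_eq_sum_integral_rpow_sub_one_mul hf hf0 (by linarith) hSp).symm
    (integral_rpow_eq_sum_integral_rpow_sub_one_mul hf hf0 hr0.ne' hSr).symm
    (fun j _ => integral_rpow_sub_one_mul_le (hf0 j) hS0 hp (hfp j) hSp)
    (fun j _ => hR j)

end Integral

theorem radon_type_ratio_m_functions_general (a b : ℝ) (m : ℕ)
    (f : Fin m → ℝ → ℝ) (hf : ∀ j, Measurable (f j))
    (hf0 : ∀ j, ∀ x ∈ Icc a b, 0 ≤ f j x)
    (p r : ℝ) (hr0 : 0 < r) (hr1 : r < 1) (hp : 1 < p)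
    (hfp : ∀ j, IntegrableOn (fun x => f j x ^ p) (Icc a b))
    (hfrpos : ∀ j, 0 < ∫ x in Icc a b, f j x ^ r)
    (hsp : IntegrableOn (fun x => (∑ j, f j x) ^ p) (Icc a b))
    (hsr : IntegrableOn (fun x => (∑ j, f j x) ^ r) (Icc a b))
    (hsrpos : 0 < ∫ x in Icc a b, (∑ j, f j x) ^ r) :
    ((∫ x in Icc a b, (∑ j, f j x) ^ p) / (∫ x in Icc a b, (∑ j, f j x) ^ r)) ^ (1 / (p - r))
      ≤ ∑ j, ((∫ x in Icc a b, f j x ^ p) / (∫ x in Icc a b, f j x ^ r)) ^ (1 / (p - r)) :=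
  giniMean_sum_le hr0 hr1 hp (fun j => (hf j).aemeasurable)
    (fun j => ae_restrict_of_forall_mem measurableSet_Icc (hf0 j)) hfp hfrpos hsp hsr hsrpos

theorem radon_type_ratio_m_functions (a b : ℝ) (hab : a < b) (m : ℕ) (hm : 1 ≤ m)
    (f : Fin m → ℝ → ℝ) (hf : ∀ j, Measurable (f j))
    (hf0 : ∀ j, ∀ x ∈ Icc a b, 0 ≤ f j x)
    (p r : ℝ) (hr0 : 0 < r) (hr1 : r < 1) (hp : 1 < p)
    (hfp : ∀ j, IntegrableOn (fun x => f j x ^ p) (Icc a b))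
    (hfr : ∀ j, IntegrableOn (fun x => f j x ^ r) (Icc a b))
    (hfrpos : ∀ j, 0 < ∫ x in Icc a b, f j x ^ r)
    (hsp : IntegrableOn (fun x => (∑ j, f j x) ^ p) (Icc a b))
    (hsr : IntegrableOn (fun x => (∑ j, f j x) ^ r) (Icc a b))
    (hsrpos : 0 < ∫ x in Icc a b, (∑ j, f j x) ^ r) :
    ((∫ x in Icc a b, (∑ j, f j x) ^ p) / (∫ x in Icc a b, (∑ j, f j x) ^ r)) ^ (1 / (p - r))
      ≤ ∑ j, ((∫ x in Icc a b, f j x ^ p) / (∫ x in Icc a b, f j x ^ r)) ^ (1 / (p - r)) :=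
  radon_type_ratio_m_functions_general a b m f hf hf0 p r hr0 hr1 hp hfp hfrpos hsp hsr hsrpos
end
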